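/- Let (A; θ_0,…,θ_d; A*; θ*_0,…,θ*_d) be a Leonard system on V with first split sequence φ_1,…,φ_d, and let η*_0 be a nonzero vector in E*_0 V. Then for 1 ≤ i ≤ d, the superdiagonal entry of the matrix representing A* with respect to the standard basis E_0η*_0, E_1η*_0, …, E_dη*_0 is given by: E_{i−1} A* E_i η*_0 = φ_i · [(θ_{i−1}−θ_0)(θ_{i−1}−θ_1)⋯(θ_{i−1}−θ_{i−2})] / [(θ_i−θ_0)(θ_i−θ_1)⋯(θ_i−θ_{i−1})] · E_{i−1} η*_0. -/
import Mathlib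


open Polynomial Finset

/-- The primitive idempotent of `A` associated with the eigenvalue `θ i`:
`E_i = ∏_{j ≠ i} (A - θ_j I) / (θ_i - θ_j)`. -/
noncomputable def primIdem {K V : Type*} [Field K] [AddCommGroup V] [Module K V]
    {d : ℕ} (A : Module.End K V) (θ : Fin (d + 1) → K) (i : Fin (d + 1)) :
    Module.End K V :=
  aeval A (∏ j ∈ Finset.univ.erase i, (C ((θ i - θ j)⁻¹) * (X - C (θ j))))

section Aux
variable {K V : Type*} [Field K] [AddCommGroup V] [Module K V] {d : ℕ}

lemma primIdem_eq (A : Module.End K V) (θ : Fin (d + 1) → K) (i : Fin (d + 1)) :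
    primIdem A θ i = aeval A (Lagrange.basis Finset.univ θ i) := by
  simp [primIdem, Lagrange.basis, Lagrange.basisDivisor]

lemma sum_primIdem (A : Module.End K V) {θ : Fin (d + 1) → K} (hθ : Function.Injective θ) :
    ∑ i, primIdem A θ i = 1 := by
  simp_rw [primIdem_eq]
  rw [← map_sum, Lagrange.sum_basis (Set.injOn_of_injective hθ) ⟨0, mem_univ 0⟩, map_one]

lemma aeval_mul_primIdem (A : Module.End K V) {θ : Fin (d + 1) → K}
    (hmin : minpoly K A = ∏ i, (X - C (θ i))) (q : K[X]) (i : Fin (d + 1)) :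
    aeval A q * primIdem A θ i = q.eval (θ i) • primIdem A θ i := by
  have hkey : aeval A (X - C (θ i)) * primIdem A θ i = 0 := by
    unfold primIdem
    rw [← map_mul]
    have hpoly : (X - C (θ i)) * ∏ j ∈ Finset.univ.erase i, (C ((θ i - θ j)⁻¹) * (X - C (θ j)))
        = C (∏ j ∈ Finset.univ.erase i, (θ i - θ j)⁻¹) * ∏ j, (X - C (θ j)) := by
      rw [prod_mul_distrib, map_prod]
      rw [← Finset.mul_prod_erase Finset.univ (fun j => (X - C (θ j))) (mem_univ i)]
      ring
    rw [hpoly, ← hmin, map_mul, aeval_C, minpoly.aeval, mul_zero]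
  obtain ⟨r, hr⟩ := X_sub_C_dvd_sub_C_eval (a := θ i) (p := q)
  have hq : q = r * (X - C (θ i)) + C (q.eval (θ i)) := by linear_combination hr
  conv_lhs => rw [hq]
  rw [map_add, map_mul, aeval_C, add_mul, mul_assoc, hkey, mul_zero, zero_add,
    Algebra.algebraMap_eq_smul_one, smul_mul_assoc, one_mul]

lemma primIdem_apply_aeval (A : Module.End K V) {θ : Fin (d + 1) → K}
    (hmin : minpoly K A = ∏ i, (X - C (θ i))) (q : K[X]) (i : Fin (d + 1)) (w : V) :
    primIdem A θ i (aeval A q w) = q.eval (θ i) • primIdem A θ i w := by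
  have h1 : primIdem A θ i * aeval A q = aeval A q * primIdem A θ i := by
    rw [primIdem_eq, ← map_mul, ← map_mul, mul_comm]
  calc primIdem A θ i (aeval A q w) = (primIdem A θ i * aeval A q) w := rfl
    _ = (aeval A q * primIdem A θ i) w := by rw [h1]
    _ = (q.eval (θ i) • primIdem A θ i) w := by rw [aeval_mul_primIdem A hmin q i]
    _ = q.eval (θ i) • primIdem A θ i w := rfl

end Aux

/-- A Leonard system `(A; θ_0,…,θ_d; A*; θ*_0,…,θ*_d)` on `V`. -/
def IsLeonardSystem {K V : Type*} [Field K] [AddCommGroup V] [Module K V]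
    {d : ℕ} (A Astar : Module.End K V) (θ θs : Fin (d + 1) → K) : Prop :=
  Function.Injective θ ∧ Function.Injective θs ∧
  minpoly K A = ∏ i, (X - C (θ i)) ∧
  minpoly K Astar = ∏ i, (X - C (θs i)) ∧
  (∀ i j : Fin (d + 1),
    ((1 : ℤ) < |((i : ℕ) : ℤ) - ((j : ℕ) : ℤ)| →
      primIdem A θ i * Astar * primIdem A θ j = 0) ∧
    (|((i : ℕ) : ℤ) - ((j : ℕ) : ℤ)| = 1 →
      primIdem A θ i * Astar * primIdem A θ j ≠ 0)) ∧
  (∀ i j : Fin (d + 1),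
    ((1 : ℤ) < |((i : ℕ) : ℤ) - ((j : ℕ) : ℤ)| →
      primIdem Astar θs i * A * primIdem Astar θs j = 0) ∧
    (|((i : ℕ) : ℤ) - ((j : ℕ) : ℤ)| = 1 →
      primIdem Astar θs i * A * primIdem Astar θs j ≠ 0))

/-- The superdiagonal entry of the matrix representing `A*` in the standard basis
`E_0 η*_0, …, E_d η*_0`:
`E_{i−1} A* E_i η*_0 = φ_i (θ_{i−1}−θ_0)⋯(θ_{i−1}−θ_{i−2}) / ((θ_i−θ_0)⋯(θ_i−θ_{i−1})) • E_{i−1} η*_0`,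
where `φ_1, …, φ_d` is the first split sequence. -/
theorem stmt_10 {K V : Type*} [Field K] [AddCommGroup V] [Module K V] [FiniteDimensional K V]
    {d : ℕ} (hdim : Module.finrank K V = d + 1)
    (A Astar : Module.End K V) (θ θs : Fin (d + 1) → K)
    (hLS : IsLeonardSystem A Astar θ θs)
    (u : V) (hu : u ∈ LinearMap.range (primIdem Astar θs 0)) (hu0 : u ≠ 0)
    (v : Fin (d + 1) → V)
    (hv : ∀ i : Fin (d + 1),
      v i = (aeval A (∏ k ∈ Finset.univ.filter (fun k => k < i), (X - C (θ k)))) u)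
    (φ : Fin (d + 1) → K)
    (hφ : ∀ i j : Fin (d + 1), (j : ℕ) + 1 = (i : ℕ) →
      Astar (v i) = θs i • v i + φ i • v j) :
    ∀ i j : Fin (d + 1), (j : ℕ) + 1 = (i : ℕ) →
      (primIdem A θ j * Astar * primIdem A θ i) u =
        (φ i * (∏ k ∈ Finset.univ.filter (fun k => k < j), (θ j - θ k)) /
          (∏ k ∈ Finset.univ.filter (fun k => k < i), (θ i - θ k)))
          • (primIdem A θ j) u := by
  obtain ⟨hθ, hθs, hminA, hminAs, hE, hEs⟩ := hLS
  intro i j hij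
  have hlt : j < i := by rw [Fin.lt_def]; omega
  have heval : ∀ m l : Fin (d + 1),
      Polynomial.eval (θ l) (∏ k ∈ Finset.univ.filter (fun k => k < m), (X - C (θ k)))
        = ∏ k ∈ Finset.univ.filter (fun k => k < m), (θ l - θ k) := by
    intro m l; simp [eval_prod]
  have hzero : ∀ m : Fin (d + 1), m < i →
      Polynomial.eval (θ m) (∏ k ∈ Finset.univ.filter (fun k => k < i), (X - C (θ k))) = 0 := by
    intro m hm
    rw [heval]
    exact Finset.prod_eq_zero (by simp [hm]) (sub_self _)
  have hci : Polynomial.eval (θ i) (∏ k ∈ Finset.univ.filter (fun k => k < i), (X - C (θ k))) ≠ 0 := by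
    rw [heval]
    refine Finset.prod_ne_zero_iff.mpr fun k hk => ?_
    simp only [mem_filter] at hk
    exact sub_ne_zero.mpr fun h => absurd (hθ h).symm (ne_of_lt hk.2)
  have hdecomp : v i = ∑ l,
      Polynomial.eval (θ l) (∏ k ∈ Finset.univ.filter (fun k => k < i), (X - C (θ k)))
        • primIdem A θ l u := by
    have h1 : v i = (∑ l, primIdem A θ l) (v i) := by rw [sum_primIdem A hθ]; simp
    rw [h1, LinearMap.sum_apply]
    refine Finset.sum_congr rfl fun l _ => ?_
    rw [hv i, primIdem_apply_aeval A hminA]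
  have hA : primIdem A θ j (Astar (v i)) = ∑ l,
      Polynomial.eval (θ l) (∏ k ∈ Finset.univ.filter (fun k => k < i), (X - C (θ k)))
        • (primIdem A θ j * Astar * primIdem A θ l) u := by
    rw [hdecomp, map_sum, map_sum]
    exact Finset.sum_congr rfl fun l _ => by simp [Module.End.mul_apply]
  have hcollapse : (∑ l,
      Polynomial.eval (θ l) (∏ k ∈ Finset.univ.filter (fun k => k < i), (X - C (θ k)))
        • (primIdem A θ j * Astar * primIdem A θ l) u)
      = Polynomial.eval (θ i) (∏ k ∈ Finset.univ.filter (fun k => k < i), (X - C (θ k)))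
        • (primIdem A θ j * Astar * primIdem A θ i) u := by
    apply Finset.sum_eq_single
    · intro l _ hli
      rcases lt_or_gt_of_ne hli with h | h
      · rw [hzero l h, zero_smul]
      · have hil : (i : ℕ) < (l : ℕ) := h
        have h0 := (hE j l).1 (by rw [lt_abs]; right; omega)
        rw [h0]; simp
    · intro h; exact absurd (mem_univ i) h
  have hB : primIdem A θ j (Astar (v i))
      = (φ i * Polynomial.eval (θ j) (∏ k ∈ Finset.univ.filter (fun k => k < j), (X - C (θ k))))
        • primIdem A θ j u := by
    rw [hφ i j hij, map_add, map_smul, map_smul]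
    have h1 : primIdem A θ j (v i) = 0 := by
      rw [hv i, primIdem_apply_aeval A hminA, hzero j hlt, zero_smul]
    have h2 : primIdem A θ j (v j)
        = Polynomial.eval (θ j) (∏ k ∈ Finset.univ.filter (fun k => k < j), (X - C (θ k)))
          • primIdem A θ j u := by
      rw [hv j, primIdem_apply_aeval A hminA]
    rw [h1, h2, smul_zero, zero_add, smul_smul]
  have hmain : Polynomial.eval (θ i) (∏ k ∈ Finset.univ.filter (fun k => k < i), (X - C (θ k)))
      • (primIdem A θ j * Astar * primIdem A θ i) u
      = (φ i * Polynomial.eval (θ j) (∏ k ∈ Finset.univ.filter (fun k => k < j), (X - C (θ k))))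
        • primIdem A θ j u := by
    rw [← hcollapse, ← hA, hB]
  set cv := Polynomial.eval (θ i) (∏ k ∈ Finset.univ.filter (fun k => k < i), (X - C (θ k))) with hcv
  have hT : (primIdem A θ j * Astar * primIdem A θ i) u
      = (cv⁻¹ * (φ i * Polynomial.eval (θ j) (∏ k ∈ Finset.univ.filter (fun k => k < j), (X - C (θ k)))))
        • primIdem A θ j u := by
    rw [← smul_smul, ← hmain, smul_smul, inv_mul_cancel₀ hci, one_smul]
  rw [hT]
  congr 1
  rw [heval, show cv = ∏ k ∈ Finset.univ.filter (fun k => k < i), (θ i - θ k) from by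
    rw [hcv, heval], div_eq_mul_inv, mul_comm]
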